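/- arXiv:1205.1774 — 6 statements merged into one kernel-verified Lean document; each statement's English description precedes it below -/
import Mathlib

section
/- Let f ∈ L²([0,1]^d) with ANOVA decomposition f = Σ_{u ⊆ 𝒟} f_u, where f_u depends only on coordinates in u, ∫₀¹ f_u dx_j = 0 for each j ∈ u, and f_∅ ≡ μ. For x, z independent uniform on [0,1]^d and u, v ⊆ 𝒟, let y_u denote the hybrid point with coordinates x_j for j ∈ u and z_j for j ∉ u. Then E[f(y_u) f(y_v)] = μ² + Σ_{w ⊆ nxor(u,v)} ∫ f_w² , i.e. Θ_{uv} = μ² + τ̲²_{nxor(u,v)}. -/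
open MeasureTheory

/-- The uniform probability measure on the cube `[0,1]^d`. -/
noncomputable def unifCube (d : ℕ) : Measure (Fin d → ℝ) :=
  Measure.pi fun _ => volume.restrict (Set.Icc (0 : ℝ) 1)

/-- `nxor(u,v) = (u ∩ v) ∪ (uᶜ ∩ vᶜ)`, complements within `𝒟` (modeled by `Fin d`). -/
def nxor {d : ℕ} (u v : Finset (Fin d)) : Finset (Fin d) := (u ∩ v) ∪ (uᶜ ∩ vᶜ)

/-- The hybrid point `y_u = x_u : z_{-u}`. -/
def glue {d : ℕ} (u : Finset (Fin d)) (x z : Fin d → ℝ) : Fin d → ℝ :=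
  fun j => if j ∈ u then x j else z j

/-! Exchanging the coordinates of `x` and `z` outside `u` preserves the product measure and maps
`(y_u, y_v)` to `(a, a_s : b_{-s})` with `s = nxor(u,v)`. Expand the second factor by the ANOVA
decomposition: a component `f_w` with `j ∈ w \ s` integrates to zero in the free coordinate `b_j`,
while for `w ⊆ s` it equals `f_w(a)`. Orthogonality of the components leaves `∫ f_w²` for each
`w ⊆ s`, and `w = ∅` contributes `μ²`. -/

open Function

section Update

variable {ι : Type*} [Fintype ι] [DecidableEq ι] {X : ι → Type*} [∀ i, MeasurableSpace (X i)]
  (μ : ∀ i, Measure (X i)) [∀ i, SigmaFinite (μ i)]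

theorem measurePreserving_update (j : ι) [IsProbabilityMeasure (μ j)] :
    MeasurePreserving (fun p : (∀ i, X i) × X j => update p.1 j p.2)
      ((Measure.pi μ).prod (μ j)) (Measure.pi μ) := by
  have hmeas : Measurable (fun p : (∀ i, X i) × X j => update p.1 j p.2) := by fun_prop
  refine ⟨hmeas, (Measure.pi_eq fun s hs => ?_).symm⟩
  have hpre : (fun p : (∀ i, X i) × X j => update p.1 j p.2) ⁻¹' Set.univ.pi s
      = Set.univ.pi (update s j Set.univ) ×ˢ s j := by
    ext ⟨x, t⟩
    simp only [Set.mem_preimage, Set.mem_univ_pi, Set.mem_prod]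
    rw [forall_update_iff x (p := fun i y => y ∈ s i),
      forall_update_iff s (p := fun i (S : Set (X i)) => x i ∈ S)]
    simp [and_comm]
  rw [Measure.map_apply hmeas (.univ_pi hs), hpre, Measure.prod_prod, Measure.pi_pi,
    ← Finset.prod_erase_mul _ _ (Finset.mem_univ j), ← Finset.prod_erase_mul _ _ (Finset.mem_univ j)]
  simp only [update_self, measure_univ, mul_one]
  congr 1
  refine Finset.prod_congr rfl fun i hi => ?_
  rw [update_of_ne (Finset.ne_of_mem_erase hi)]

theorem integral_eq_zero_of_integral_update_eq_zero {E : Type*} [NormedAddCommGroup E]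
    [NormedSpace ℝ E] {g : (∀ i, X i) → E} (j : ι) [IsProbabilityMeasure (μ j)]
    (h0 : ∀ x, ∫ t, g (update x j t) ∂(μ j) = 0) :
    ∫ x, g x ∂(Measure.pi μ) = 0 := by
  by_cases hg : Integrable g (Measure.pi μ)
  · have hmp := measurePreserving_update μ j
    have hcomp : Integrable (fun p : (∀ i, X i) × X j => g (update p.1 j p.2))
        ((Measure.pi μ).prod (μ j)) := hmp.integrable_comp_of_integrable hg
    rw [← hmp.map_eq, integral_map hmp.measurable.aemeasurable
      (by rw [hmp.map_eq]; exact hg.aestronglyMeasurable), integral_prod _ hcomp]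
    simp [h0]
  · exact integral_undef hg

theorem integral_mul_eq_zero_of_dependsOn {g h : (∀ i, X i) → ℝ} {s : Set ι} {j : ι}
    [IsProbabilityMeasure (μ j)] (hj : j ∉ s) (hh : DependsOn h s)
    (h0 : ∀ x, ∫ t, g (update x j t) ∂(μ j) = 0) :
    ∫ x, g x * h x ∂(Measure.pi μ) = 0 := by
  refine integral_eq_zero_of_integral_update_eq_zero μ j fun x => ?_
  have hconst : ∀ t, h (update x j t) = h x := fun t =>
    hh fun i hi => update_of_ne (ne_of_mem_of_not_mem hi hj) t x
  simp_rw [hconst, integral_mul_const, h0, zero_mul]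

end Update

section ANOVA

variable {ι : Type*} [Fintype ι] [DecidableEq ι] {X : ι → Type*} [∀ i, MeasurableSpace (X i)]
  {μ : ∀ i, Measure (X i)} [∀ i, IsProbabilityMeasure (μ i)] {f : (∀ i, X i) → ℝ}
  {fu : Finset ι → (∀ i, X i) → ℝ}

theorem integral_mul_eq_zero_of_ne (hdep : ∀ w, DependsOn (fu w) w)
    (hzero : ∀ w, ∀ j ∈ w, ∀ x, ∫ t, fu w (update x j t) ∂(μ j) = 0)
    {w w' : Finset ι} (hne : w ≠ w') :
    ∫ x, fu w x * fu w' x ∂(Measure.pi μ) = 0 := by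
  by_cases hsub : w ⊆ w'
  · obtain ⟨j, hjw', hjw⟩ := Finset.not_subset.mp fun h => hne (hsub.antisymm h)
    simp_rw [mul_comm (fu w _)]
    exact integral_mul_eq_zero_of_dependsOn μ hjw (hdep w) (hzero w' j hjw')
  · obtain ⟨j, hjw, hjw'⟩ := Finset.not_subset.mp hsub
    exact integral_mul_eq_zero_of_dependsOn μ hjw' (hdep w') (hzero w j hjw)

theorem integral_mul_eq_integral_sq (hdecomp : ∀ x, f x = ∑ w, fu w x)
    (hL2 : ∀ w, MemLp (fu w) 2 (Measure.pi μ)) (hdep : ∀ w, DependsOn (fu w) w)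
    (hzero : ∀ w, ∀ j ∈ w, ∀ x, ∫ t, fu w (update x j t) ∂(μ j) = 0) (w : Finset ι) :
    ∫ x, f x * fu w x ∂(Measure.pi μ) = ∫ x, fu w x ^ 2 ∂(Measure.pi μ) := by
  simp_rw [hdecomp, Finset.sum_mul]
  have hint : ∀ w', Integrable (fun x => fu w' x * fu w x) (Measure.pi μ) := fun w' =>
    (hL2 w').integrable_mul (hL2 w)
  rw [integral_finsetSum _ fun w' _ => hint w',
    Finset.sum_eq_single w (fun w' _ hne => integral_mul_eq_zero_of_ne hdep hzero hne)
      fun h => (h (Finset.mem_univ w)).elim]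
  simp_rw [sq]

end ANOVA

section Glue

variable {d : ℕ} (μ : Fin d → Measure ℝ) [∀ i, IsProbabilityMeasure (μ i)]

theorem glue_of_mem {u : Finset (Fin d)} {j : Fin d} (hj : j ∈ u) (x z : Fin d → ℝ) :
    glue u x z j = x j := if_pos hj

theorem glue_update_right_of_notMem {u : Finset (Fin d)} {j : Fin d} (hj : j ∉ u)
    (x z : Fin d → ℝ) (t : ℝ) :
    glue u x (update z j t) = update (glue u x z) j t := by
  ext i
  rcases eq_or_ne i j with rfl | hij <;> simp [glue, *]

theorem glue_nxor (u v : Finset (Fin d)) (x z : Fin d → ℝ) :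
    glue (nxor u v) (glue u x z) (glue u z x) = glue v x z := by
  ext j
  by_cases hu : j ∈ u <;> by_cases hv : j ∈ v <;> simp [glue, nxor, hu, hv]

theorem glue_glue_swap (u : Finset (Fin d)) (x z : Fin d → ℝ) :
    glue u (glue u x z) (glue u z x) = x := by
  ext j
  by_cases hu : j ∈ u <;> simp [glue, hu]

@[fun_prop]
theorem measurable_glue (u : Finset (Fin d)) :
    Measurable (fun p : (Fin d → ℝ) × (Fin d → ℝ) => glue u p.1 p.2) := by
  refine measurable_pi_lambda _ fun j => ?_
  unfold glue
  split_ifs <;> fun_prop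

theorem measurePreserving_glue (u : Finset (Fin d)) :
    MeasurePreserving (fun p : (Fin d → ℝ) × (Fin d → ℝ) => glue u p.1 p.2)
      ((Measure.pi μ).prod (Measure.pi μ)) (Measure.pi μ) := by
  classical
  have hcoord : ∀ j, MeasurePreserving (if j ∈ u then Prod.fst else Prod.snd)
      ((μ j).prod (μ j)) (μ j) := fun j => by
    split_ifs
    exacts [measurePreserving_fst, measurePreserving_snd]
  convert (measurePreserving_pi _ _ hcoord).comp
    (measurePreserving_arrowProdEquivProdArrow ℝ ℝ (Fin d) μ μ).symm using 1
  ext p j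
  by_cases hj : j ∈ u <;> simp [glue, hj, MeasurableEquiv.arrowProdEquivProdArrow]

def glueSwap (u : Finset (Fin d)) : (Fin d → ℝ) × (Fin d → ℝ) ≃ᵐ (Fin d → ℝ) × (Fin d → ℝ) :=
  MeasurableEquiv.ofInvolutive (fun p => (glue u p.1 p.2, glue u p.2 p.1))
    (fun p => by simp only [glue_glue_swap])
    (by fun_prop)

@[simp]
theorem glueSwap_apply (u : Finset (Fin d)) (p : (Fin d → ℝ) × (Fin d → ℝ)) :
    glueSwap u p = (glue u p.1 p.2, glue u p.2 p.1) := rfl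

theorem measurePreserving_glueSwap (u : Finset (Fin d)) :
    MeasurePreserving (glueSwap u) ((Measure.pi μ).prod (Measure.pi μ))
      ((Measure.pi μ).prod (Measure.pi μ)) := by
  classical
  have hcoord : ∀ j, MeasurePreserving (if j ∈ u then id else Prod.swap)
      ((μ j).prod (μ j)) ((μ j).prod (μ j)) := fun j => by
    split_ifs
    exacts [.id _, Measure.measurePreserving_swap]
  have e := measurePreserving_arrowProdEquivProdArrow ℝ ℝ (Fin d) μ μ
  convert e.comp ((measurePreserving_pi _ _ hcoord).comp e.symm) using 1
  ext p j <;> by_cases hj : j ∈ u <;>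
    simp [glue, hj, MeasurableEquiv.arrowProdEquivProdArrow]

theorem integral_mul_comp_glue_of_dependsOn {F g : (Fin d → ℝ) → ℝ} {w s : Finset (Fin d)}
    (hg : DependsOn g w) (hws : w ⊆ s) :
    ∫ p : (Fin d → ℝ) × (Fin d → ℝ), F p.1 * g (glue s p.1 p.2)
        ∂((Measure.pi μ).prod (Measure.pi μ)) = ∫ x, F x * g x ∂(Measure.pi μ) := by
  have hglue : ∀ x z, g (glue s x z) = g x := fun x z =>
    hg fun i hi => glue_of_mem (hws hi) x z
  simp_rw [hglue]
  simp [integral_fun_fst (fun x => F x * g x)]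

theorem integral_mul_comp_glue_eq_zero {F g : (Fin d → ℝ) → ℝ} {s : Finset (Fin d)} {j : Fin d}
    (hj : j ∉ s) (h0 : ∀ x, ∫ t, g (update x j t) ∂(μ j) = 0)
    (hint : Integrable (fun p : (Fin d → ℝ) × (Fin d → ℝ) => F p.1 * g (glue s p.1 p.2))
      ((Measure.pi μ).prod (Measure.pi μ))) :
    ∫ p : (Fin d → ℝ) × (Fin d → ℝ), F p.1 * g (glue s p.1 p.2)
        ∂((Measure.pi μ).prod (Measure.pi μ)) = 0 := by
  have hinner : ∀ x, ∫ z, F x * g (glue s x z) ∂(Measure.pi μ) = 0 := fun x =>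
    integral_eq_zero_of_integral_update_eq_zero μ j fun z => by
      simp_rw [glue_update_right_of_notMem hj, integral_const_mul, h0, mul_zero]
  simp [integral_prod _ hint, hinner]

end Glue

theorem sobol_matrix_entry_general {d : ℕ}
    (f : (Fin d → ℝ) → ℝ) (fu : Finset (Fin d) → (Fin d → ℝ) → ℝ) (μ : ℝ)
    (hfL2 : MemLp f 2 (unifCube d))
    (hfuL2 : ∀ u, MemLp (fu u) 2 (unifCube d))
    (hdecomp : ∀ x, f x = ∑ u : Finset (Fin d), fu u x)
    (hconst : ∀ x, fu ∅ x = μ)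
    (hdep : ∀ u, ∀ x y : Fin d → ℝ, (∀ j ∈ u, x j = y j) → fu u x = fu u y)
    (hzero : ∀ u : Finset (Fin d), ∀ j ∈ u, ∀ x : Fin d → ℝ,
      ∫ t in Set.Icc (0 : ℝ) 1, fu u (Function.update x j t) = 0)
    (u v : Finset (Fin d)) :
    ∫ p : (Fin d → ℝ) × (Fin d → ℝ),
        f (glue u p.1 p.2) * f (glue v p.1 p.2) ∂((unifCube d).prod (unifCube d))
      = μ ^ 2 + ∑ w ∈ (nxor u v).powerset.filter (fun w => w ≠ ∅),
          ∫ x, (fu w x) ^ 2 ∂(unifCube d) := by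
  have : IsProbabilityMeasure (volume.restrict (Set.Icc (0 : ℝ) 1)) := ⟨by simp⟩
  unfold unifCube at *
  set ν := Measure.pi fun _ : Fin d => volume.restrict (Set.Icc (0 : ℝ) 1)
  set s := nxor u v
  have hdepOn : ∀ w, DependsOn (fu w) w := fun w x y h => hdep w x y h
  have hint : ∀ w, Integrable (fun p : (Fin d → ℝ) × (Fin d → ℝ) => f p.1 * fu w (glue s p.1 p.2))
      (ν.prod ν) := fun w =>
    (hfL2.comp_measurePreserving measurePreserving_fst).integrable_mul
      ((hfuL2 w).comp_measurePreserving (measurePreserving_glue _ s))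
  have hexpand : ∀ p : (Fin d → ℝ) × (Fin d → ℝ),
      f p.1 * f (glue s p.1 p.2) = ∑ w, f p.1 * fu w (glue s p.1 p.2) := fun p => by
    rw [hdecomp (glue s p.1 p.2), Finset.mul_sum]
  calc ∫ p, f (glue u p.1 p.2) * f (glue v p.1 p.2) ∂(ν.prod ν)
      = ∫ p, f p.1 * f (glue s p.1 p.2) ∂(ν.prod ν) := by
        simpa only [glueSwap_apply, s, glue_nxor] using
          (measurePreserving_glueSwap _ u).integral_comp' fun p => f p.1 * f (glue s p.1 p.2)
    _ = ∑ w, ∫ p, f p.1 * fu w (glue s p.1 p.2) ∂(ν.prod ν) := by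
        simp_rw [hexpand]
        exact integral_finsetSum _ fun w _ => hint w
    _ = ∑ w ∈ s.powerset, ∫ x, f x * fu w x ∂ν := by
        rw [← Finset.sum_subset (Finset.subset_univ s.powerset)]
        · exact Finset.sum_congr rfl fun w hw =>
            integral_mul_comp_glue_of_dependsOn _ (hdepOn w) (Finset.mem_powerset.mp hw)
        · intro w _ hw
          obtain ⟨j, hjw, hjs⟩ := Finset.not_subset.mp (mt Finset.mem_powerset.mpr hw)
          exact integral_mul_comp_glue_eq_zero _ hjs (hzero w j hjw) (hint w)
    _ = ∑ w ∈ s.powerset, ∫ x, fu w x ^ 2 ∂ν :=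
        Finset.sum_congr rfl fun w _ => integral_mul_eq_integral_sq hdecomp hfuL2 hdepOn hzero w
    _ = μ ^ 2 + ∑ w ∈ s.powerset.filter (fun w => w ≠ ∅), ∫ x, fu w x ^ 2 ∂ν := by
        rw [← Finset.add_sum_erase _ _ (Finset.empty_mem_powerset s), Finset.filter_ne']
        simp [hconst]

/-- Entry of the Sobol' matrix: `Θ_{uv} = E[f(y_u) f(y_v)] = μ² + τ̲²_{nxor(u,v)}`. -/
theorem sobol_matrix_entry {d : ℕ} (hd : 1 ≤ d)
    (f : (Fin d → ℝ) → ℝ) (fu : Finset (Fin d) → (Fin d → ℝ) → ℝ) (μ : ℝ)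
    (hf : Measurable f) (hfL2 : MemLp f 2 (unifCube d))
    (hfu : ∀ u, Measurable (fu u)) (hfuL2 : ∀ u, MemLp (fu u) 2 (unifCube d))
    (hμ : μ = ∫ x, f x ∂(unifCube d))
    (hdecomp : ∀ x, f x = ∑ u : Finset (Fin d), fu u x)
    (hconst : ∀ x, fu ∅ x = μ)
    (hdep : ∀ u, ∀ x y : Fin d → ℝ, (∀ j ∈ u, x j = y j) → fu u x = fu u y)
    (hzero : ∀ u : Finset (Fin d), ∀ j ∈ u, ∀ x : Fin d → ℝ,
      ∫ t in Set.Icc (0 : ℝ) 1, fu u (Function.update x j t) = 0)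
    (u v : Finset (Fin d)) :
    ∫ p : (Fin d → ℝ) × (Fin d → ℝ),
        f (glue u p.1 p.2) * f (glue v p.1 p.2) ∂((unifCube d).prod (unifCube d))
      = μ ^ 2 + ∑ w ∈ (nxor u v).powerset.filter (fun w => w ≠ ∅),
          ∫ x, (fu w x) ^ 2 ∂(unifCube d) :=
  sobol_matrix_entry_general f fu μ hfL2 hfuL2 hdecomp hconst hdep hzero u v
end

section
/- In a square generalized Sobol' index Σ_r λ_r^T Θ λ_r with Θ_{uv} = μ² + τ̲²_{nxor(u,v)} and τ̲²_w = Σ_{v ⊆ w} σ²_v, the coefficient of σ²_𝒟 is Σ_r Σ_u λ_{r,u}². Equivalently: viewing Σ_r λ_r^T Θ λ_r as a function of the variables (σ²_u)_{u ⊆ 𝒟}, the partial derivative with respect to σ²_𝒟 equals Σ_r Σ_u λ_{r,u}². In particular, a nonzero sum-of-squares GSI cannot be free of σ²_𝒟. -/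
open Finset

lemma nxor_eq_univ_iff {d : ℕ} (u v : Finset (Fin d)) : nxor u v = univ ↔ u = v := by
  rw [eq_univ_iff_forall, Finset.ext_iff]
  refine forall_congr' fun a => ?_
  simp only [nxor, mem_union, mem_inter, mem_compl]
  tauto

lemma univ_mem_powerset_nxor_iff {d : ℕ} (u v : Finset (Fin d)) :
    univ ∈ (nxor u v).powerset ↔ u = v := by
  rw [mem_powerset, univ_subset_iff, nxor_eq_univ_iff]

lemma hasDerivAt_sum_update {α : Type*} [DecidableEq α] (f : α → ℝ) (a : α) (s : Finset α)
    (t : ℝ) :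
    HasDerivAt (fun x => ∑ w ∈ s, Function.update f a x w) (if a ∈ s then 1 else 0) t := by
  have hterm (w : α) :
      HasDerivAt (fun x => Function.update f a x w) (if w = a then 1 else 0) t := by
    simp only [Function.update_apply]
    split_ifs
    · exact hasDerivAt_id t
    · exact hasDerivAt_const t _
  simpa only [sum_ite_eq'] using HasDerivAt.fun_sum fun w _ => hterm w

lemma hasDerivAt_sum_sum_mul_mul {ι : Type*} [Fintype ι] (c : ι → ℝ) {Θ : ℝ → ι → ι → ℝ}
    {Θ' : ι → ι → ℝ} {t : ℝ} (h : ∀ u v, HasDerivAt (fun s => Θ s u v) (Θ' u v) t) :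
    HasDerivAt (fun s => ∑ u, ∑ v, c u * c v * Θ s u v) (∑ u, ∑ v, c u * c v * Θ' u v) t :=
  HasDerivAt.fun_sum fun u _ => HasDerivAt.fun_sum fun v _ => (h u v).const_mul _

lemma sum_sum_mul_mul_ite_eq {ι : Type*} [Fintype ι] [DecidableEq ι] (c : ι → ℝ) :
    ∑ u, ∑ v, c u * c v * (if u = v then 1 else 0) = ∑ u, c u ^ 2 := by
  simp [mul_ite, sq]

theorem coeff_of_sigma_univ_in_sum_of_squares_general {d R : ℕ} (μ : ℝ)
    (lam : Fin R → Finset (Fin d) → ℝ)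
    (σ2 : Finset (Fin d) → ℝ) (t : ℝ) :
    HasDerivAt (fun s : ℝ =>
      ∑ r : Fin R, ∑ u : Finset (Fin d), ∑ v : Finset (Fin d),
        lam r u * lam r v *
          (μ ^ 2 + ∑ w ∈ (nxor u v).powerset, Function.update σ2 Finset.univ s w))
      (∑ r : Fin R, ∑ u : Finset (Fin d), (lam r u) ^ 2) t := by
  have hΘ (u v : Finset (Fin d)) :
      HasDerivAt (fun s => μ ^ 2 + ∑ w ∈ (nxor u v).powerset, Function.update σ2 univ s w)
        (if u = v then 1 else 0) t := by
    simpa only [univ_mem_powerset_nxor_iff] using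
      (hasDerivAt_sum_update σ2 univ (nxor u v).powerset t).const_add (μ ^ 2)
  refine HasDerivAt.fun_sum fun r _ => ?_
  rw [← sum_sum_mul_mul_ite_eq]
  exact hasDerivAt_sum_sum_mul_mul (lam r)
    (Θ := fun s u v => μ ^ 2 + ∑ w ∈ (nxor u v).powerset, Function.update σ2 univ s w) hΘ

/-- The coefficient of `σ²_𝒟` in a sum-of-squares GSI `∑ r, λᵣᵀ Θ λᵣ`, viewed as a function of
the variance components (here of the single variable `σ²_𝒟`, the others held fixed),
is `∑ r ∑ u λ_{r,u}²`. -/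
theorem coeff_of_sigma_univ_in_sum_of_squares {d R : ℕ} (hd : 1 ≤ d) (μ : ℝ)
    (lam : Fin R → Finset (Fin d) → ℝ)
    (σ2 : Finset (Fin d) → ℝ) (h0 : σ2 ∅ = 0) (t : ℝ) :
    HasDerivAt (fun s : ℝ =>
      ∑ r : Fin R, ∑ u : Finset (Fin d), ∑ v : Finset (Fin d),
        lam r u * lam r v *
          (μ ^ 2 + ∑ w ∈ (nxor u v).powerset, Function.update σ2 Finset.univ s w))
      (∑ r : Fin R, ∑ u : Finset (Fin d), (lam r u) ^ 2) t :=
  coeff_of_sigma_univ_in_sum_of_squares_general μ lam σ2 t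
end

section
/- Bilinear representation of a variance component: let w ⊆ 𝒟 be nonempty, w₁ ⊆ w, w₂ = w \ w₁. With Θ_{uv} = μ² + τ̲²_{nxor(u,v)} and τ̲²_s = Σ_{v ⊆ s} σ²_v (σ²_∅ = 0), if μ = 0 then Σ_{u₁ ⊆ w₁} Σ_{u₂ ⊆ w₂} (−1)^{|u₁|+|u₂|} Θ_{u₁, u₂ ∪ wᶜ} = σ²_w. -/
lemma aux_sign {d : ℕ} (t s : Finset (Fin d)) :
    ∑ u ∈ t.powerset, (if Disjoint s u then ((-1 : ℝ)) ^ u.card else 0)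
      = if t \ s = ∅ then 1 else 0 := by
  classical
  rw [← Finset.sum_filter]
  have h : t.powerset.filter (fun u => Disjoint s u) = (t \ s).powerset := by
    ext u
    simp [Finset.mem_powerset, Finset.subset_sdiff, disjoint_comm, and_comm]
  have hz : (((∑ m ∈ (t \ s).powerset, (-1 : ℤ) ^ m.card : ℤ)) : ℝ)
      = if t \ s = ∅ then 1 else 0 := by
    rw [Finset.sum_powerset_neg_one_pow_card]; split_ifs <;> simp
  rw [h, ← hz]
  push_cast
  rfl

/-- Bilinear representation of the variance component `σ²_w` (with `μ = 0`, so that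
`Θ_{uv} = τ̲²_{nxor(u,v)} = ∑_{s ⊆ nxor(u,v)} σ²_s`). -/
theorem bilinear_variance_component {d : ℕ} (hd : 1 ≤ d)
    (σ2 : Finset (Fin d) → ℝ) (h0 : σ2 ∅ = 0)
    (w w₁ : Finset (Fin d)) (hw : w.Nonempty) (h1 : w₁ ⊆ w) :
    ∑ u₁ ∈ w₁.powerset, ∑ u₂ ∈ (w \ w₁).powerset,
      (-1 : ℝ) ^ (u₁.card + u₂.card) *
        (∑ s ∈ (nxor u₁ (u₂ ∪ wᶜ)).powerset, σ2 s)
      = σ2 w := by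
  classical
  have hnx : ∀ u₁ ∈ w₁.powerset, ∀ u₂ ∈ (w \ w₁).powerset,
      nxor u₁ (u₂ ∪ wᶜ) = w \ (u₁ ∪ u₂) := by
    intro u₁ hu₁ u₂ hu₂
    rw [Finset.mem_powerset] at hu₁ hu₂
    ext x
    have h1x := @h1 x
    have h2x : x ∈ u₂ → x ∈ w ∧ x ∉ w₁ := fun h => Finset.mem_sdiff.mp (hu₂ h)
    have h3x := @hu₁ x
    simp only [nxor, Finset.mem_union, Finset.mem_inter, Finset.mem_compl, Finset.mem_sdiff,
      not_or]
    tauto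
  calc
    ∑ u₁ ∈ w₁.powerset, ∑ u₂ ∈ (w \ w₁).powerset,
      (-1 : ℝ) ^ (u₁.card + u₂.card) * (∑ s ∈ (nxor u₁ (u₂ ∪ wᶜ)).powerset, σ2 s)
      = ∑ u₁ ∈ w₁.powerset, ∑ u₂ ∈ (w \ w₁).powerset,
          ∑ s ∈ w.powerset,
            ((if Disjoint s u₁ then ((-1 : ℝ)) ^ u₁.card else 0)
              * ((if Disjoint s u₂ then ((-1 : ℝ)) ^ u₂.card else 0) * σ2 s)) := by
      refine Finset.sum_congr rfl fun u₁ hu₁ => Finset.sum_congr rfl fun u₂ hu₂ => ?_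
      rw [hnx u₁ hu₁ u₂ hu₂]
      have hps : (w \ (u₁ ∪ u₂)).powerset
          = w.powerset.filter (fun s => Disjoint s u₁ ∧ Disjoint s u₂) := by
        ext s
        simp [Finset.subset_sdiff, Finset.disjoint_union_right, and_assoc]
      rw [hps, Finset.mul_sum, Finset.sum_filter]
      refine Finset.sum_congr rfl fun s hs => ?_
      by_cases hP : Disjoint s u₁ <;> by_cases hQ : Disjoint s u₂ <;>
        simp [hP, hQ, pow_add] <;> ring
    _ = ∑ s ∈ w.powerset, ∑ u₁ ∈ w₁.powerset, ∑ u₂ ∈ (w \ w₁).powerset,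
            ((if Disjoint s u₁ then ((-1 : ℝ)) ^ u₁.card else 0)
              * ((if Disjoint s u₂ then ((-1 : ℝ)) ^ u₂.card else 0) * σ2 s)) := by
      rw [Finset.sum_congr rfl fun u₁ _ => Finset.sum_comm]
      exact Finset.sum_comm
    _ = ∑ s ∈ w.powerset,
          (if w₁ \ s = ∅ then (1:ℝ) else 0) * ((if (w \ w₁) \ s = ∅ then (1:ℝ) else 0) * σ2 s) := by
      refine Finset.sum_congr rfl fun s hs => ?_
      simp only [← Finset.mul_sum]
      rw [← Finset.sum_mul, aux_sign, ← Finset.sum_mul, aux_sign]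
    _ = σ2 w := by
      have key : ∀ s ∈ w.powerset,
          (if w₁ \ s = ∅ then (1:ℝ) else 0) * ((if (w \ w₁) \ s = ∅ then (1:ℝ) else 0) * σ2 s)
            = if s = w then σ2 s else 0 := by
        intro s hs
        rw [Finset.mem_powerset] at hs
        by_cases h : s = w
        · subst h
          simp [Finset.sdiff_eq_empty_iff_subset, h1]
        · have hor : w₁ \ s ≠ ∅ ∨ (w \ w₁) \ s ≠ ∅ := by
            by_contra hc
            push_neg at hc
            obtain ⟨ha, hb⟩ := hc
            rw [Finset.sdiff_eq_empty_iff_subset] at ha hb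
            refine h (Finset.Subset.antisymm hs ?_)
            intro x hx
            by_cases hx1 : x ∈ w₁
            · exact ha hx1
            · exact hb (Finset.mem_sdiff.mpr ⟨hx, hx1⟩)
          rcases hor with h' | h' <;> simp [h', h]
      rw [Finset.sum_congr rfl key, Finset.sum_ite_eq' w.powerset w σ2]
      simp
end

section
/- Bilinear representation of superset importance: let w ⊆ 𝒟 be nonempty, w₁ ⊆ w, w₂ = w \ w₁, and μ = 0. Then Σ_{u₁ ⊆ w₁} Σ_{u₂ ⊆ w₂} (−1)^{|u₁|+|u₂|} Θ_{wᶜ ∪ u₁, wᶜ ∪ u₂} = Σ_{v ⊇ w} σ²_v, where Θ_{uv} = τ̲²_{nxor(u,v)} = Σ_{s ⊆ nxor(u,v)} σ²_s. -/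
lemma neg_one_powerset_sum {d : ℕ} (t : Finset (Fin d)) :
    ∑ u ∈ t.powerset, (-1:ℝ)^u.card = if t = ∅ then 1 else 0 := by
  have h := Finset.sum_powerset_neg_one_pow_card (x := t)
  have h2 := congrArg (fun z : ℤ => (z:ℝ)) h
  push_cast at h2
  simpa [apply_ite] using h2

lemma nxor_compl {d : ℕ} (w u₁ u₂ : Finset (Fin d)) (h1 : u₁ ⊆ w) (h2 : u₂ ⊆ w)
    (hd : Disjoint u₁ u₂) : nxor (wᶜ ∪ u₁) (wᶜ ∪ u₂) = (u₁ ∪ u₂)ᶜ := by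
  ext a
  have := @h1 a; have := @h2 a
  have hd' : ¬ (a ∈ u₁ ∧ a ∈ u₂) := fun ⟨x,y⟩ => (Finset.disjoint_left.mp hd x) y
  simp [nxor]
  tauto

lemma ind_sum {d : ℕ} (t s : Finset (Fin d)) :
    ∑ u ∈ t.powerset, (-1:ℝ)^u.card * (if Disjoint u s then 1 else 0)
      = if t ⊆ s then 1 else 0 := by
  have hf : t.powerset.filter (fun u => Disjoint u s) = (t \ s).powerset := by
    ext u
    simp [Finset.mem_powerset, Finset.subset_sdiff]
  calc ∑ u ∈ t.powerset, (-1:ℝ)^u.card * (if Disjoint u s then 1 else 0)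
      = ∑ u ∈ t.powerset, (if Disjoint u s then (-1:ℝ)^u.card else 0) := by
        refine Finset.sum_congr rfl fun u _ => ?_
        by_cases h : Disjoint u s <;> simp [h]
    _ = ∑ u ∈ t.powerset.filter (fun u => Disjoint u s), (-1:ℝ)^u.card := by
        rw [Finset.sum_filter]
    _ = ∑ u ∈ (t \ s).powerset, (-1:ℝ)^u.card := by rw [hf]
    _ = if t \ s = ∅ then 1 else 0 := neg_one_powerset_sum _
    _ = if t ⊆ s then 1 else 0 := if_congr Finset.sdiff_eq_empty_iff_subset rfl rfl

/-- Bilinear representation of superset importance `Υ²_w = ∑_{v ⊇ w} σ²_v` (with `μ = 0`). -/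
theorem bilinear_superset_importance {d : ℕ} (hd : 1 ≤ d)
    (σ2 : Finset (Fin d) → ℝ) (h0 : σ2 ∅ = 0)
    (w w₁ : Finset (Fin d)) (hw : w.Nonempty) (h1 : w₁ ⊆ w) :
    ∑ u₁ ∈ w₁.powerset, ∑ u₂ ∈ (w \ w₁).powerset,
      (-1 : ℝ) ^ (u₁.card + u₂.card) *
        (∑ s ∈ (nxor (wᶜ ∪ u₁) (wᶜ ∪ u₂)).powerset, σ2 s)
      = ∑ v ∈ Finset.univ.filter (fun v : Finset (Fin d) => w ⊆ v), σ2 v := by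
  have step1 : ∀ u₁ ∈ w₁.powerset, ∀ u₂ ∈ (w \ w₁).powerset,
      ∑ s ∈ (nxor (wᶜ ∪ u₁) (wᶜ ∪ u₂)).powerset, σ2 s
        = ∑ s : Finset (Fin d), σ2 s *
            ((if Disjoint u₁ s then 1 else 0) * (if Disjoint u₂ s then 1 else 0)) := by
    intro u₁ hu₁ u₂ hu₂
    rw [Finset.mem_powerset] at hu₁ hu₂
    rw [nxor_compl w u₁ u₂ (hu₁.trans h1) (hu₂.trans (Finset.sdiff_subset))
      (Finset.disjoint_left.mpr fun a ha₁ ha₂ =>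
        (Finset.mem_sdiff.mp (hu₂ ha₂)).2 (hu₁ ha₁))]
    rw [show (u₁ ∪ u₂)ᶜ.powerset
        = Finset.univ.filter (fun s => Disjoint u₁ s ∧ Disjoint u₂ s) from by
      ext s
      simp only [Finset.mem_powerset, Finset.mem_filter, Finset.mem_univ, true_and,
        Finset.subset_iff, Finset.mem_compl, Finset.mem_union, not_or, Finset.disjoint_left]
      aesop]
    rw [Finset.sum_filter]
    refine Finset.sum_congr rfl fun s _ => ?_
    by_cases hA : Disjoint u₁ s <;> by_cases hB : Disjoint u₂ s <;> simp [hA, hB]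
  rw [Finset.sum_congr rfl fun u₁ hu₁ => Finset.sum_congr rfl fun u₂ hu₂ => by
    rw [step1 u₁ hu₁ u₂ hu₂]]
  have step2 : ∀ s : Finset (Fin d),
      ∑ u₁ ∈ w₁.powerset, ∑ u₂ ∈ (w \ w₁).powerset,
        (-1:ℝ)^(u₁.card+u₂.card) * (σ2 s *
          ((if Disjoint u₁ s then 1 else 0) * (if Disjoint u₂ s then 1 else 0)))
      = if w ⊆ s then σ2 s else 0 := by
    intro s
    have e1 := ind_sum w₁ s
    have e2 := ind_sum (w \ w₁) s
    have key : (∑ u₁ ∈ w₁.powerset, (-1:ℝ)^u₁.card * (if Disjoint u₁ s then 1 else 0))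
        * (∑ u₂ ∈ (w \ w₁).powerset, (-1:ℝ)^u₂.card * (if Disjoint u₂ s then 1 else 0))
        = if w ⊆ s then 1 else 0 := by
      rw [e1, e2]
      have : w ⊆ s ↔ w₁ ⊆ s ∧ w \ w₁ ⊆ s := by
        constructor
        · intro h; exact ⟨h1.trans h, (Finset.sdiff_subset).trans h⟩
        · intro ⟨a, b⟩; intro x hx
          by_cases hx1 : x ∈ w₁
          · exact a hx1
          · exact b (Finset.mem_sdiff.mpr ⟨hx, hx1⟩)
      by_cases hA : w₁ ⊆ s <;> by_cases hB : w \ w₁ ⊆ s <;> simp [hA, hB, this]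
    calc ∑ u₁ ∈ w₁.powerset, ∑ u₂ ∈ (w \ w₁).powerset,
        (-1:ℝ)^(u₁.card+u₂.card) * (σ2 s *
          ((if Disjoint u₁ s then 1 else 0) * (if Disjoint u₂ s then 1 else 0)))
        = σ2 s * ((∑ u₁ ∈ w₁.powerset, (-1:ℝ)^u₁.card * (if Disjoint u₁ s then 1 else 0))
          * (∑ u₂ ∈ (w \ w₁).powerset, (-1:ℝ)^u₂.card * (if Disjoint u₂ s then 1 else 0))) := by
          rw [Finset.sum_mul_sum, Finset.mul_sum]
          refine Finset.sum_congr rfl fun u₁ _ => ?_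
          rw [Finset.mul_sum]
          refine Finset.sum_congr rfl fun u₂ _ => ?_
          rw [pow_add]; ring
      _ = σ2 s * (if w ⊆ s then 1 else 0) := by rw [key]
      _ = if w ⊆ s then σ2 s else 0 := by by_cases h : w ⊆ s <;> simp [h]
  calc ∑ u₁ ∈ w₁.powerset, ∑ u₂ ∈ (w \ w₁).powerset,
      (-1:ℝ)^(u₁.card+u₂.card) * ∑ s : Finset (Fin d), σ2 s *
        ((if Disjoint u₁ s then 1 else 0) * (if Disjoint u₂ s then 1 else 0))
      = ∑ s : Finset (Fin d), ∑ u₁ ∈ w₁.powerset, ∑ u₂ ∈ (w \ w₁).powerset,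
        (-1:ℝ)^(u₁.card+u₂.card) * (σ2 s *
          ((if Disjoint u₁ s then 1 else 0) * (if Disjoint u₂ s then 1 else 0))) := by
        rw [show (∑ u₁ ∈ w₁.powerset, ∑ u₂ ∈ (w \ w₁).powerset,
            (-1:ℝ)^(u₁.card+u₂.card) * ∑ s : Finset (Fin d), σ2 s *
              ((if Disjoint u₁ s then 1 else 0) * (if Disjoint u₂ s then 1 else 0)))
          = ∑ u₁ ∈ w₁.powerset, ∑ u₂ ∈ (w \ w₁).powerset, ∑ s : Finset (Fin d),
            (-1:ℝ)^(u₁.card+u₂.card) * (σ2 s *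
              ((if Disjoint u₁ s then 1 else 0) * (if Disjoint u₂ s then 1 else 0)))
          from Finset.sum_congr rfl fun u₁ _ => Finset.sum_congr rfl fun u₂ _ =>
            Finset.mul_sum _ _ _]
        rw [show (∑ u₁ ∈ w₁.powerset, ∑ u₂ ∈ (w \ w₁).powerset, ∑ s : Finset (Fin d),
            (-1:ℝ)^(u₁.card+u₂.card) * (σ2 s *
              ((if Disjoint u₁ s then 1 else 0) * (if Disjoint u₂ s then 1 else 0))))
          = ∑ u₁ ∈ w₁.powerset, ∑ s : Finset (Fin d), ∑ u₂ ∈ (w \ w₁).powerset,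
            (-1:ℝ)^(u₁.card+u₂.card) * (σ2 s *
              ((if Disjoint u₁ s then 1 else 0) * (if Disjoint u₂ s then 1 else 0)))
          from Finset.sum_congr rfl fun u₁ _ => Finset.sum_comm]
        exact Finset.sum_comm
    _ = ∑ s : Finset (Fin d), if w ⊆ s then σ2 s else 0 := by
        exact Finset.sum_congr rfl fun s _ => step2 s
    _ = ∑ v ∈ Finset.univ.filter (fun v : Finset (Fin d) => w ⊆ v), σ2 v := by
        rw [Finset.sum_filter]
end

section
/- Truncation mean-dimension identities: for σ² : subsets of 𝒟 = {1,...,d} → ℝ with σ²_∅ = 0, Σ_{j=1}^{d−1} τ̲²_{(0,j]} = Σ_{u ≠ ∅} (d − ⌈u⌉) σ²_u and Σ_{j=1}^{d−1} τ̲²_{(j,d]} = Σ_{u ≠ ∅} (⌊u⌋ − 1) σ²_u, where (0,j] = {1,...,j}, (j,d] = {j+1,...,d}, ⌈u⌉ = max u, ⌊u⌋ = min u. -/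
lemma trunc_aux (σ2 : Finset ℕ → ℝ) (h0 : σ2 ∅ = 0) (P : Finset (Finset ℕ))
    (S : ℕ → Finset ℕ) (s : Finset ℕ)
    (hP : ∀ j ∈ s, (S j).powerset.filter Finset.Nonempty = P.filter (· ⊆ S j)) :
    ∑ j ∈ s, ∑ v ∈ (S j).powerset, σ2 v
      = ∑ v ∈ P, ((s.filter (fun j => v ⊆ S j)).card : ℝ) * σ2 v := by
  have h1 : ∀ j ∈ s, ∑ v ∈ (S j).powerset, σ2 v
      = ∑ v ∈ P, (if v ⊆ S j then σ2 v else 0) := by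
    intro j hj
    rw [← Finset.sum_filter]
    rw [← hP j hj]
    rw [Finset.sum_filter_of_ne]
    intro v hv hne
    rw [Finset.nonempty_iff_ne_empty]
    intro he; exact hne (he ▸ h0)
  rw [Finset.sum_congr rfl h1, Finset.sum_comm]
  refine Finset.sum_congr rfl fun v hv => ?_
  rw [← Finset.sum_filter, Finset.sum_const, nsmul_eq_mul]

/-- Truncation mean-dimension identities.  Here `𝒟 = {1,…,d}` is `Finset.Icc 1 d ⊆ ℕ`,
`(0,j] = Finset.Icc 1 j`, `(j,d] = Finset.Icc (j+1) d`,
`τ̲²_s = ∑_{v ⊆ s} σ²_v`, and for nonempty `u`, `⌈u⌉ = u.max'`, `⌊u⌋ = u.min'`. -/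
theorem truncation_mean_dimension {d : ℕ} (hd : 2 ≤ d)
    (σ2 : Finset ℕ → ℝ) (h0 : σ2 ∅ = 0) :
    (∑ j ∈ Finset.Icc 1 (d - 1), ∑ v ∈ (Finset.Icc 1 j).powerset, σ2 v)
      = (∑ u ∈ ((Finset.Icc 1 d).powerset.filter Finset.Nonempty).attach,
          ((d : ℝ) - (u.1.max' (Finset.mem_filter.mp u.2).2 : ℕ)) * σ2 u.1)
    ∧ (∑ j ∈ Finset.Icc 1 (d - 1), ∑ v ∈ (Finset.Icc (j + 1) d).powerset, σ2 v)
      = (∑ u ∈ ((Finset.Icc 1 d).powerset.filter Finset.Nonempty).attach,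
          (((u.1.min' (Finset.mem_filter.mp u.2).2 : ℕ) : ℝ) - 1) * σ2 u.1) := by
  set P := (Finset.Icc 1 d).powerset.filter Finset.Nonempty with hPdef
  have hd1 : 1 ≤ d := le_trans one_le_two hd
  have hmem : ∀ v ∈ P, v.Nonempty ∧ v ⊆ Finset.Icc 1 d := fun v hv => by
    obtain ⟨h1, h2⟩ := Finset.mem_filter.mp hv
    exact ⟨h2, Finset.mem_powerset.mp h1⟩
  have hside : ∀ (S : ℕ → Finset ℕ), (∀ j ∈ Finset.Icc 1 (d-1), ∀ v, v ⊆ S j → v ⊆ Finset.Icc 1 d) →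
      ∀ j ∈ Finset.Icc 1 (d - 1),
        Finset.filter Finset.Nonempty (S j).powerset = Finset.filter (· ⊆ S j) P := by
    intro S hS j hj
    ext v
    simp only [Finset.mem_filter, Finset.mem_powerset, hPdef]
    constructor
    · rintro ⟨hvs, hvne⟩
      exact ⟨⟨hS j hj v hvs, hvne⟩, hvs⟩
    · rintro ⟨⟨_, hvne⟩, hvs⟩
      exact ⟨hvs, hvne⟩
  have hS1 : ∀ j ∈ Finset.Icc 1 (d-1), ∀ v : Finset ℕ, v ⊆ Finset.Icc 1 j → v ⊆ Finset.Icc 1 d := by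
    intro j hj v hv x hx
    obtain ⟨hj1, hj2⟩ := Finset.mem_Icc.mp hj
    have := Finset.mem_Icc.mp (hv hx)
    exact Finset.mem_Icc.mpr (by omega)
  have hS2 : ∀ j ∈ Finset.Icc 1 (d-1), ∀ v : Finset ℕ, v ⊆ Finset.Icc (j+1) d → v ⊆ Finset.Icc 1 d := by
    intro j hj v hv x hx
    have := Finset.mem_Icc.mp (hv hx)
    exact Finset.mem_Icc.mpr (by omega)
  constructor
  · rw [trunc_aux σ2 h0 P (fun j => Finset.Icc 1 j) (Finset.Icc 1 (d-1)) (hside _ hS1)]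
    rw [← Finset.sum_attach P
      (fun v => (((Finset.Icc 1 (d-1)).filter (fun j => v ⊆ Finset.Icc 1 j)).card : ℝ) * σ2 v)]
    refine Finset.sum_congr rfl fun u _ => ?_
    obtain ⟨hne, hsub⟩ := hmem u.1 u.2
    have hm := (Finset.mem_filter.mp u.2).2
    set m := u.1.max' hm with hmm
    have hm1 : m ∈ u.1 := Finset.max'_mem _ _
    have hmd : m ≤ d := (Finset.mem_Icc.mp (hsub hm1)).2
    have hm1' : 1 ≤ m := (Finset.mem_Icc.mp (hsub hm1)).1
    have hfe : (Finset.Icc 1 (d-1)).filter (fun j => u.1 ⊆ Finset.Icc 1 j)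
        = Finset.Icc m (d-1) := by
      ext j
      simp only [Finset.mem_filter, Finset.mem_Icc]
      constructor
      · rintro ⟨⟨hj1, hj2⟩, hs⟩
        exact ⟨(Finset.mem_Icc.mp (hs hm1)).2, hj2⟩
      · rintro ⟨hj1, hj2⟩
        refine ⟨⟨le_trans hm1' hj1, hj2⟩, fun x hx => ?_⟩
        exact Finset.mem_Icc.mpr ⟨(Finset.mem_Icc.mp (hsub hx)).1,
          le_trans (Finset.le_max' _ _ hx) hj1⟩
    rw [hfe, Nat.card_Icc]
    have : d - 1 + 1 - m = d - m := by omega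
    rw [this, Nat.cast_sub hmd]
  · rw [trunc_aux σ2 h0 P (fun j => Finset.Icc (j+1) d) (Finset.Icc 1 (d-1)) (hside _ hS2)]
    rw [← Finset.sum_attach P
      (fun v => (((Finset.Icc 1 (d-1)).filter (fun j => v ⊆ Finset.Icc (j+1) d)).card : ℝ) * σ2 v)]
    refine Finset.sum_congr rfl fun u _ => ?_
    obtain ⟨hne, hsub⟩ := hmem u.1 u.2
    have hm := (Finset.mem_filter.mp u.2).2
    set m := u.1.min' hm with hmm
    have hm1 : m ∈ u.1 := Finset.min'_mem _ _
    have hmd : m ≤ d := (Finset.mem_Icc.mp (hsub hm1)).2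
    have hm1' : 1 ≤ m := (Finset.mem_Icc.mp (hsub hm1)).1
    have hfe : (Finset.Icc 1 (d-1)).filter (fun j => u.1 ⊆ Finset.Icc (j+1) d)
        = Finset.Icc 1 (m-1) := by
      ext j
      simp only [Finset.mem_filter, Finset.mem_Icc]
      constructor
      · rintro ⟨⟨hj1, hj2⟩, hs⟩
        have := (Finset.mem_Icc.mp (hs hm1)).1
        exact ⟨hj1, by omega⟩
      · rintro ⟨hj1, hj2⟩
        refine ⟨⟨hj1, by omega⟩, fun x hx => ?_⟩
        have hxm : m ≤ x := Finset.min'_le _ _ hx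
        exact Finset.mem_Icc.mpr ⟨by omega, (Finset.mem_Icc.mp (hsub hx)).2⟩
    rw [hfe, Nat.card_Icc]
    have : m - 1 + 1 - 1 = m - 1 := by omega
    rw [this, Nat.cast_sub hm1', Nat.cast_one]
end

section
/- Unbiasedness of the bias-corrected Janon-type estimator: let X_i = f(x_i) and Y_i = f(y_i), i = 1,...,n (n ≥ 2), be i.i.d. pairs of square-integrable real random variables with E[X_i] = E[Y_i] = μ, Var(X_i) = Var(Y_i) = σ², and Cov(X_i, Y_i) = τ̲². Define μ̂ = (1/n)Σ X_i, μ̂' = (1/n)Σ Y_i, s² = (1/(n−1))Σ(X_i − μ̂)², s'² = (1/(n−1))Σ(Y_i − μ̂')². Then E[ (2n/(2n−1)) ( (1/n)Σ X_i Y_i − ((μ̂+μ̂')/2)² + (s² + s'²)/(4n) ) ] = τ̲². -/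
/-!
`(1/n) ∑ Xᵢ Yᵢ` has mean `τ̲² + μ²`. The average `(μ̂ + μ̂')/2` is half the sample mean of the
independent variables `Xᵢ + Yᵢ`, which have mean `2μ` and variance `2σ² + 2τ̲²`, so its square has
mean `μ² + (σ² + τ̲²)/(2n)`. The sample variances are unbiased, so the correction term has mean
`σ²/(2n)`, and the bracket has mean `τ̲² (2n - 1)/(2n)`.
-/

open MeasureTheory ProbabilityTheory

section Statistics

variable {n : ℕ}

noncomputable def sampleMean (x : Fin n → ℝ) : ℝ := (1 / (n : ℝ)) * ∑ i, x i

noncomputable def sampleVariance (x : Fin n → ℝ) : ℝ :=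
  (1 / ((n : ℝ) - 1)) * ∑ i, (x i - sampleMean x) ^ 2

noncomputable def biasCorrectedJanon (x y : Fin n → ℝ) : ℝ :=
  (2 * (n : ℝ) / (2 * (n : ℝ) - 1)) *
    (sampleMean (x * y) - ((sampleMean x + sampleMean y) / 2) ^ 2
      + (sampleVariance x + sampleVariance y) / (4 * (n : ℝ)))

lemma sum_sq_sub_sampleMean (x : Fin n → ℝ) :
    ∑ i, (x i - sampleMean x) ^ 2 = ∑ i, x i ^ 2 - n * sampleMean x ^ 2 := by
  rcases eq_or_ne n 0 with rfl | hn
  · simp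
  simp only [sampleMean, sub_sq, Finset.sum_add_distrib, Finset.sum_sub_distrib, Finset.sum_const,
    Finset.card_univ, Fintype.card_fin, nsmul_eq_mul, ← Finset.sum_mul, ← Finset.mul_sum]
  field_simp
  ring

end Statistics

namespace ProbabilityTheory

variable {Ω ι : Type*} [MeasurableSpace Ω] {P : Measure Ω} {n : ℕ}

lemma integrable_sampleMean {U : Fin n → Ω → ℝ} (hU : ∀ i, Integrable (U i) P) :
    Integrable (fun ω => sampleMean fun i => U i ω) P :=
  (integrable_finsetSum _ fun i _ => hU i).const_mul _

lemma memLp_sampleMean {p : ENNReal} {U : Fin n → Ω → ℝ} (hU : ∀ i, MemLp (U i) p P) :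
    MemLp (fun ω => sampleMean fun i => U i ω) p P :=
  (memLp_finsetSum _ fun i _ => hU i).const_mul _

lemma integrable_sampleVariance {U : Fin n → Ω → ℝ} (hU : ∀ i, MemLp (U i) 2 P) :
    Integrable (fun ω => sampleVariance fun i => U i ω) P :=
  (integrable_finsetSum _ fun i _ => ((hU i).sub (memLp_sampleMean hU)).integrable_sq).const_mul _

lemma integral_sampleMean (hn : n ≠ 0) {U : Fin n → Ω → ℝ} {m : ℝ}
    (hU : ∀ i, Integrable (U i) P) (hm : ∀ i, P[U i] = m) :
    ∫ ω, sampleMean (fun i => U i ω) ∂P = m := by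
  simp only [sampleMean]
  rw [integral_const_mul, integral_finsetSum _ fun i _ => hU i]
  simp only [hm, Finset.sum_const, Finset.card_univ, Fintype.card_fin, nsmul_eq_mul]
  field_simp

variable [IsProbabilityMeasure P]

lemma integral_sq_eq_variance_add_sq {U : Ω → ℝ} (hU : MemLp U 2 P) :
    ∫ ω, U ω ^ 2 ∂P = Var[U; P] + P[U] ^ 2 := by
  rw [variance_eq_sub hU, sub_add_cancel]
  rfl

lemma integral_mul_eq_covariance_add_mul {U V : Ω → ℝ} (hU : MemLp U 2 P) (hV : MemLp V 2 P) :
    ∫ ω, U ω * V ω ∂P = cov[U, V; P] + P[U] * P[V] := by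
  rw [covariance_eq_sub hU hV, sub_add_cancel]
  rfl

lemma integral_sq_sum_of_pairwise_indepFun [Fintype ι] {U : ι → Ω → ℝ} {m v : ℝ}
    (hU : ∀ i, MemLp (U i) 2 P) (hind : Pairwise fun i j => U i ⟂ᵢ[P] U j)
    (hm : ∀ i, P[U i] = m) (hv : ∀ i, Var[U i; P] = v) :
    ∫ ω, (∑ i, U i ω) ^ 2 ∂P = Fintype.card ι * v + (Fintype.card ι * m) ^ 2 := by
  have hvar : Var[∑ i, U i; P] = Fintype.card ι * v := by
    rw [IndepFun.variance_sum (fun i _ => hU i) fun i _ j _ hij => hind hij]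
    simp [hv]
  have hmean : ∫ ω, ∑ i, U i ω ∂P = Fintype.card ι * m := by
    rw [integral_finsetSum _ fun i _ => (hU i).integrable one_le_two]
    simp [hm]
  have h := integral_sq_eq_variance_add_sq (memLp_finsetSum' Finset.univ fun i _ => hU i)
  simp only [Finset.sum_apply] at h
  rw [h, hvar, hmean]

lemma integral_sampleMean_sq (hn : n ≠ 0) {U : Fin n → Ω → ℝ} {m v : ℝ}
    (hU : ∀ i, MemLp (U i) 2 P) (hind : Pairwise fun i j => U i ⟂ᵢ[P] U j)
    (hm : ∀ i, P[U i] = m) (hv : ∀ i, Var[U i; P] = v) :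
    ∫ ω, (sampleMean fun i => U i ω) ^ 2 ∂P = v / n + m ^ 2 := by
  have h := integral_sq_sum_of_pairwise_indepFun hU hind hm hv
  simp only [Fintype.card_fin] at h
  simp only [sampleMean, mul_pow]
  rw [integral_const_mul, h]
  field_simp

lemma integral_sampleVariance (hn : 1 < n) {U : Fin n → Ω → ℝ} {m v : ℝ}
    (hU : ∀ i, MemLp (U i) 2 P) (hind : Pairwise fun i j => U i ⟂ᵢ[P] U j)
    (hm : ∀ i, P[U i] = m) (hv : ∀ i, Var[U i; P] = v) :
    ∫ ω, sampleVariance (fun i => U i ω) ∂P = v := by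
  have hn1 : (n : ℝ) - 1 ≠ 0 := sub_ne_zero.2 (Nat.cast_ne_one.2 (by omega))
  simp only [sampleVariance, sum_sq_sub_sampleMean]
  rw [integral_const_mul, integral_sub (integrable_finsetSum _ fun i _ => (hU i).integrable_sq)
      ((memLp_sampleMean hU).integrable_sq.const_mul _),
    integral_finsetSum _ fun i _ => (hU i).integrable_sq, integral_const_mul,
    integral_sampleMean_sq (by omega) hU hind hm hv]
  simp only [integral_sq_eq_variance_add_sq (hU _), hm, hv, Finset.sum_const, Finset.card_univ,
    Fintype.card_fin, nsmul_eq_mul]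
  field_simp
  ring

lemma integral_biasCorrectedJanon (hn : 1 < n) {X Y : Fin n → Ω → ℝ} {m σ τ : ℝ}
    (hX : ∀ i, MemLp (X i) 2 P) (hY : ∀ i, MemLp (Y i) 2 P)
    (hindX : Pairwise fun i j => X i ⟂ᵢ[P] X j) (hindY : Pairwise fun i j => Y i ⟂ᵢ[P] Y j)
    (hindXY : Pairwise fun i j => (fun ω => X i ω + Y i ω) ⟂ᵢ[P] fun ω => X j ω + Y j ω)
    (hmX : ∀ i, P[X i] = m) (hmY : ∀ i, P[Y i] = m)
    (hvX : ∀ i, Var[X i; P] = σ) (hvY : ∀ i, Var[Y i; P] = σ) (hc : ∀ i, cov[X i, Y i; P] = τ) :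
    ∫ ω, biasCorrectedJanon (fun i => X i ω) (fun i => Y i ω) ∂P = τ := by
  have h2n : 2 * (n : ℝ) - 1 ≠ 0 := by
    have : (2 : ℝ) ≤ n := by exact_mod_cast hn
    linarith
  have hXY i : Integrable (fun ω => X i ω * Y i ω) P := (hX i).integrable_mul (hY i)
  have hmXY i : ∫ ω, X i ω * Y i ω ∂P = τ + m * m := by
    rw [integral_mul_eq_covariance_add_mul (hX i) (hY i), hc, hmX, hmY]
  have hS i : MemLp (fun ω => X i ω + Y i ω) 2 P := (hX i).add (hY i)
  have hmS i : ∫ ω, X i ω + Y i ω ∂P = 2 * m := by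
    rw [integral_add ((hX i).integrable one_le_two) ((hY i).integrable one_le_two), hmX, hmY,
      two_mul]
  have hvS i : Var[fun ω => X i ω + Y i ω; P] = 2 * σ + 2 * τ := by
    rw [variance_fun_add (hX i) (hY i), hvX, hvY, hc]
    ring
  have hpool ω : ((sampleMean (fun i => X i ω) + sampleMean fun i => Y i ω) / 2) ^ 2
      = (sampleMean fun i => X i ω + Y i ω) ^ 2 / 4 := by
    simp only [sampleMean, Finset.sum_add_distrib]
    ring
  have hmean := integrable_sampleMean hXY
  have hmean_sq := (memLp_sampleMean hS).integrable_sq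
  have hvarX := integrable_sampleVariance hX
  have hvarY := integrable_sampleVariance hY
  simp only [biasCorrectedJanon, Pi.mul_def, hpool]
  rw [integral_const_mul, integral_add, integral_sub, integral_div, integral_div, integral_add,
    integral_sampleMean (by omega) hXY hmXY, integral_sampleMean_sq (by omega) hS hindXY hmS hvS,
    integral_sampleVariance hn hX hindX hmX hvX, integral_sampleVariance hn hY hindY hmY hvY]
  · field_simp
    ring
  all_goals fun_prop

end ProbabilityTheory

theorem bias_corrected_janon_unbiased_general {Ω : Type*} [MeasurableSpace Ω]
    (P : Measure Ω) [IsProbabilityMeasure P] {n : ℕ} (hn : 2 ≤ n)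
    (X Y : Fin n → Ω → ℝ) (μm σ2 τ2 : ℝ)
    (hXL2 : ∀ i, MemLp (X i) 2 P) (hYL2 : ∀ i, MemLp (Y i) 2 P)
    (hindep : iIndepFun
      (fun i ω => (X i ω, Y i ω)) P)
    (hmeanX : ∀ i, ∫ ω, X i ω ∂P = μm) (hmeanY : ∀ i, ∫ ω, Y i ω ∂P = μm)
    (hvarX : ∀ i, ∫ ω, (X i ω - μm) ^ 2 ∂P = σ2)
    (hvarY : ∀ i, ∫ ω, (Y i ω - μm) ^ 2 ∂P = σ2)
    (hcov : ∀ i, ∫ ω, (X i ω - μm) * (Y i ω - μm) ∂P = τ2) :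
    ∫ ω,
        (2 * (n : ℝ) / (2 * (n : ℝ) - 1)) *
          ((1 / (n : ℝ)) * ∑ i, X i ω * Y i ω
            - (((1 / (n : ℝ)) * ∑ i, X i ω + (1 / (n : ℝ)) * ∑ i, Y i ω) / 2) ^ 2
            + ((1 / ((n : ℝ) - 1)) * ∑ i, (X i ω - (1 / (n : ℝ)) * ∑ k, X k ω) ^ 2
                + (1 / ((n : ℝ) - 1)) * ∑ i, (Y i ω - (1 / (n : ℝ)) * ∑ k, Y k ω) ^ 2)
              / (4 * (n : ℝ))) ∂P
      = τ2 := by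
  have hpair (f : ℝ × ℝ → ℝ) (hf : Measurable f) :
      Pairwise fun i j => (fun ω => f (X i ω, Y i ω)) ⟂ᵢ[P] fun ω => f (X j ω, Y j ω) :=
    fun i j hij => (hindep.comp (fun _ => f) fun _ => hf).indepFun hij
  have hVarX i : Var[X i; P] = σ2 := by
    rw [variance_eq_integral (hXL2 i).aemeasurable, hmeanX, hvarX]
  have hVarY i : Var[Y i; P] = σ2 := by
    rw [variance_eq_integral (hYL2 i).aemeasurable, hmeanY, hvarY]
  have hCov i : cov[X i, Y i; P] = τ2 := by
    rw [covariance, hmeanX, hmeanY, hcov]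
  exact integral_biasCorrectedJanon hn hXL2 hYL2 (hpair Prod.fst measurable_fst)
    (hpair Prod.snd measurable_snd) (hpair (fun p => p.1 + p.2) (by fun_prop))
    hmeanX hmeanY hVarX hVarY hCov

/-- Unbiasedness of the bias-corrected Janon-type estimator of `τ̲² = Cov(Xᵢ, Yᵢ)`. -/
theorem bias_corrected_janon_unbiased {Ω : Type*} [MeasurableSpace Ω]
    (P : Measure Ω) [IsProbabilityMeasure P] {n : ℕ} (hn : 2 ≤ n)
    (X Y : Fin n → Ω → ℝ) (μm σ2 τ2 : ℝ)
    (hXm : ∀ i, Measurable (X i)) (hYm : ∀ i, Measurable (Y i))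
    (hXL2 : ∀ i, MemLp (X i) 2 P) (hYL2 : ∀ i, MemLp (Y i) 2 P)
    (hindep : iIndepFun
      (fun i ω => (X i ω, Y i ω)) P)
    (hident : ∀ i j : Fin n,
      IdentDistrib (fun ω => (X i ω, Y i ω)) (fun ω => (X j ω, Y j ω)) P P)
    (hmeanX : ∀ i, ∫ ω, X i ω ∂P = μm) (hmeanY : ∀ i, ∫ ω, Y i ω ∂P = μm)
    (hvarX : ∀ i, ∫ ω, (X i ω - μm) ^ 2 ∂P = σ2)
    (hvarY : ∀ i, ∫ ω, (Y i ω - μm) ^ 2 ∂P = σ2)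
    (hcov : ∀ i, ∫ ω, (X i ω - μm) * (Y i ω - μm) ∂P = τ2) :
    ∫ ω,
        (2 * (n : ℝ) / (2 * (n : ℝ) - 1)) *
          ((1 / (n : ℝ)) * ∑ i, X i ω * Y i ω
            - (((1 / (n : ℝ)) * ∑ i, X i ω + (1 / (n : ℝ)) * ∑ i, Y i ω) / 2) ^ 2
            + ((1 / ((n : ℝ) - 1)) * ∑ i, (X i ω - (1 / (n : ℝ)) * ∑ k, X k ω) ^ 2
                + (1 / ((n : ℝ) - 1)) * ∑ i, (Y i ω - (1 / (n : ℝ)) * ∑ k, Y k ω) ^ 2)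
              / (4 * (n : ℝ))) ∂P
      = τ2 :=
  bias_corrected_janon_unbiased_general P hn X Y μm σ2 τ2 hXL2 hYL2 hindep hmeanX hmeanY hvarX hvarY
    hcov
end
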